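/- If A ⊆ ℕ is an SIP set, then there exists a topologically transitive dynamical system (Y,S) and a nonempty open set G ⊆ Y such that N(G,G) ⊆ A. -/
import Mathlib

set_option linter.unusedSectionVars false
set_option linter.unusedVariables false

open Filter Finset Topology

namespace SIPaux



/-- The set of finite sums of a sequence `a : ℕ → ℤ`. -/
def sums (a : ℕ → ℤ) : Set ℤ := {i | ∃ F : Finset ℕ, i = ∑ p ∈ F, a p}

variable {a : ℕ → ℤ} (hpos : ∀ p, 0 < a p)
  (hgrow : ∀ p, 2 * ∑ q ∈ Finset.range p, a q < a p)

theorem zero_mem_sums : (0 : ℤ) ∈ sums a := ⟨∅, by simp⟩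

include hpos hgrow in
theorem smono : StrictMono a := by
  apply strictMono_nat_of_lt_succ
  intro p
  have h1 := hgrow (p + 1)
  have h2 : a p ≤ ∑ q ∈ Finset.range (p + 1), a q :=
    Finset.single_le_sum (fun q _ => (hpos q).le) (Finset.self_mem_range_succ p)
  have h3 : (0 : ℤ) ≤ ∑ q ∈ Finset.range (p + 1), a q :=
    Finset.sum_nonneg (fun q _ => (hpos q).le)
  omega

include hpos hgrow in
theorem atendsto : Tendsto a atTop atTop := by
  have h : ∀ p : ℕ, a 0 + p ≤ a p := by
    intro p
    induction p with
    | zero => simp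
    | succ n ih =>
      have h := smono hpos hgrow (Nat.lt_succ_self n)
      rw [Nat.succ_eq_add_one] at h
      push_cast
      omega
  apply tendsto_atTop_mono h
  exact tendsto_atTop_add_const_left _ _ tendsto_natCast_atTop_atTop

include hpos in
theorem forward_ev {i : ℤ} (hi : i ∈ sums a) : ∀ᶠ p in atTop, i + a p ∈ sums a := by
  obtain ⟨F, hF⟩ := hi
  filter_upwards [eventually_gt_atTop (F.sup id)] with p hp
  have hpF : p ∉ F := by
    intro hmem
    have h : p ≤ F.sup id := Finset.le_sup (f := id) hmem
    omega
  exact ⟨insert p F, by rw [Finset.sum_insert hpF, hF]; ring⟩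

include hpos hgrow in
theorem backward {i : ℤ} {p : ℕ} (hip : 2 * |i| < a p) (hm : i + a p ∈ sums a) :
    i ∈ sums a := by
  obtain ⟨G, hG⟩ := hm
  have habs1 : i ≤ |i| := le_abs_self i
  have habs2 : -|i| ≤ i := neg_abs_le i
  have hsumpos : ∀ q ∈ G, (0:ℤ) ≤ a q := fun q _ => (hpos q).le
  have hpG : p ∈ G := by
    by_contra hp
    by_cases hr : ∃ r ∈ G, p < r
    · obtain ⟨r, hrG, hpr⟩ := hr
      have h1 : a r ≤ ∑ q ∈ G, a q := Finset.single_le_sum hsumpos hrG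
      have h2 : a (p+1) ≤ a r := (smono hpos hgrow).monotone hpr
      have h3 := hgrow (p + 1)
      have h4 : a p ≤ ∑ q ∈ Finset.range (p + 1), a q :=
        Finset.single_le_sum (fun q _ => (hpos q).le) (Finset.self_mem_range_succ p)
      omega
    · push_neg at hr
      have hsub : G ⊆ Finset.range p := by
        intro q hq
        have h1 := hr q hq
        have h2 : q ≠ p := fun h => hp (h ▸ hq)
        exact Finset.mem_range.mpr (by omega)
      have h1 : ∑ q ∈ G, a q ≤ ∑ q ∈ Finset.range p, a q :=
        Finset.sum_le_sum_of_subset_of_nonneg hsub (fun q _ _ => (hpos q).le)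
      have h2 := hgrow p
      omega
  refine ⟨G.erase p, ?_⟩
  have := Finset.add_sum_erase G a hpG
  omega

include hpos hgrow in
theorem recurrence (i : ℤ) :
    ∀ᶠ p in atTop, (i + a p ∈ sums a ↔ i ∈ sums a) := by
  have h1 : ∀ᶠ p in atTop, 2 * |i| < a p :=
    (atendsto hpos hgrow).eventually_gt_atTop (2 * |i|)
  by_cases hi : i ∈ sums a
  · filter_upwards [forward_ev hpos hi] with p h2
    exact ⟨fun _ => hi, fun _ => h2⟩
  · filter_upwards [h1] with p h2
    exact ⟨fun hm => backward hpos hgrow h2 hm, fun hm => absurd hm hi⟩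




theorem exists_gt_mem {A' : Set ℤ} (hpos : A' ⊆ {n : ℤ | 0 < n}) (hinf : A'.Infinite)
    (M : ℤ) : ∃ n ∈ A', M < n := by
  by_contra h
  push_neg at h
  refine hinf (Set.Finite.subset (Set.finite_Ioc 0 M) ?_)
  intro n hn
  exact Set.mem_Ioc.mpr ⟨hpos hn, h n hn⟩

/-- Pick an element of `A'` larger than `M`. -/
noncomputable def pick {A' : Set ℤ} (h : ∀ M : ℤ, ∃ n ∈ A', M < n) (M : ℤ) : ℤ :=
  (h M).choose

theorem pick_mem {A' : Set ℤ} (h : ∀ M : ℤ, ∃ n ∈ A', M < n) (M : ℤ) : pick h M ∈ A' :=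
  (h M).choose_spec.1

theorem pick_gt {A' : Set ℤ} (h : ∀ M : ℤ, ∃ n ∈ A', M < n) (M : ℤ) : M < pick h M :=
  (h M).choose_spec.2

/-- Recursively pick a fast-growing sequence in `A'`, tracking (current element, running sum). -/
noncomputable def gseq {A' : Set ℤ} (h : ∀ M : ℤ, ∃ n ∈ A', M < n) : ℕ → ℤ × ℤ
  | 0 => (pick h 0, pick h 0)
  | p + 1 =>
    let s := (gseq h p).2
    (pick h (2 * s), s + pick h (2 * s))

/-- The fast-growing sequence in `A'`. -/
noncomputable def aseq {A' : Set ℤ} (h : ∀ M : ℤ, ∃ n ∈ A', M < n) (p : ℕ) : ℤ :=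
  (gseq h p).1

theorem aseq_mem {A' : Set ℤ} (h : ∀ M : ℤ, ∃ n ∈ A', M < n) (p : ℕ) : aseq h p ∈ A' := by
  cases p with
  | zero => exact pick_mem h 0
  | succ n => exact pick_mem h _

theorem gseq_snd {A' : Set ℤ} (h : ∀ M : ℤ, ∃ n ∈ A', M < n) (p : ℕ) :
    (gseq h p).2 = ∑ q ∈ Finset.range (p + 1), aseq h q := by
  induction p with
  | zero => simp [gseq, aseq]
  | succ n ih =>
    rw [Finset.sum_range_succ, ← ih]
    rfl

theorem aseq_grow {A' : Set ℤ} (h : ∀ M : ℤ, ∃ n ∈ A', M < n) (p : ℕ) :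
    2 * ∑ q ∈ Finset.range p, aseq h q < aseq h p := by
  cases p with
  | zero => simpa [aseq, gseq] using pick_gt h 0
  | succ n =>
    have e : aseq h (n + 1) = pick h (2 * (gseq h n).2) := rfl
    rw [e, ← gseq_snd h n]
    exact pick_gt h _

theorem aseq_pos {A' : Set ℤ} (hA : A' ⊆ {n : ℤ | 0 < n})
    (h : ∀ M : ℤ, ∃ n ∈ A', M < n) (p : ℕ) : 0 < aseq h p :=
  hA (aseq_mem h p)




/-- The two-sided shift on `ℤ → Bool`. -/
def shiftHomeo : (ℤ → Bool) ≃ₜ (ℤ → Bool) where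
  toFun x i := x (i + 1)
  invFun x i := x (i - 1)
  left_inv x := funext fun i => congrArg x (by ring)
  right_inv x := funext fun i => congrArg x (by ring)
  continuous_toFun := continuous_pi fun i => continuous_apply (i + 1)
  continuous_invFun := continuous_pi fun i => continuous_apply (i - 1)

/-- Translation by `m`. -/
def Tshift (m : ℤ) (x : ℤ → Bool) : ℤ → Bool := fun i => x (i + m)

theorem shift_image_orbit (x : ℤ → Bool) :
    shiftHomeo '' (Set.range fun m : ℤ => Tshift m x) = Set.range fun m : ℤ => Tshift m x := by
  ext y
  constructor
  · rintro ⟨-, ⟨m, rfl⟩, rfl⟩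
    exact ⟨m + 1, funext fun i => congrArg x (by ring)⟩
  · rintro ⟨m, rfl⟩
    exact ⟨Tshift (m - 1) x, ⟨m - 1, rfl⟩, funext fun i => congrArg x (by ring)⟩

end SIPaux


/-- `IP A`: the set of all finite sums of distinct elements of `A ⊆ ℤ`
(sums over finite subsets `F ⊆ A`, with the empty sum equal to `0`). -/
def IP (A : Set ℤ) : Set ℤ :=
  {t | ∃ F : Finset ℤ, ↑F ⊆ A ∧ t = ∑ x ∈ F, x}

/-- `SIP A = IP A - IP A`. -/
def SIP (A : Set ℤ) : Set ℤ :=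
  {d | ∃ s ∈ IP A, ∃ t ∈ IP A, d = s - t}

/-- The positive part `S_+ = S ∩ ℕ` of a set of integers. -/
def posPart (S : Set ℤ) : Set ℤ := S ∩ {n : ℤ | 0 < n}

/-- `B` (a set of positive integers) is an SIP set: there is an infinite set
`A` of positive integers with `SIP(A)_+ ⊆ B`. -/
def IsSIPSet (B : Set ℤ) : Prop :=
  ∃ A : Set ℤ, A ⊆ {n : ℤ | 0 < n} ∧ A.Infinite ∧ posPart (SIP A) ⊆ B

/-- The hitting time set `N(A,B) = {n ∈ ℕ : S^n(A) ∩ B ≠ ∅}` (as a set of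
positive integers, viewed inside `ℤ`). -/
def hitting {Y : Type*} [TopologicalSpace Y] (S : Y ≃ₜ Y) (A B : Set Y) : Set ℤ :=
  {n : ℤ | 0 < n ∧ ∃ y ∈ A, (⇑S)^[n.toNat] y ∈ B}

/-- `(Y,S)` is topologically transitive: `N(U,V) ≠ ∅` for all nonempty open `U,V`. -/
def TopTrans {Y : Type*} [TopologicalSpace Y] (S : Y ≃ₜ Y) : Prop :=
  ∀ U V : Set Y, IsOpen U → IsOpen V → U.Nonempty → V.Nonempty →
    (hitting S U V).Nonempty

/-- Glasner–Weiss construction: if `A ⊆ ℕ` is an SIP set, then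
there is a topologically transitive dynamical system `(Y,S)` (a compact metric
space with a homeomorphism) and a nonempty open `G ⊆ Y` with `N(G,G) ⊆ A`. -/
theorem exists_transitive_system_of_sip (A : Set ℤ) (hA : A ⊆ {n : ℤ | 0 < n})
    (hSIP : IsSIPSet A) :
    ∃ (Y : Type) (_ : MetricSpace Y) (_ : CompactSpace Y) (S : Y ≃ₜ Y) (G : Set Y),
      TopTrans S ∧ IsOpen G ∧ G.Nonempty ∧ hitting S G G ⊆ A := by
  classical
  obtain ⟨A', hA'pos, hA'inf, hA'sub⟩ := hSIP
  have hex : ∀ M : ℤ, ∃ n ∈ A', M < n := SIPaux.exists_gt_mem hA'pos hA'inf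
  set a : ℕ → ℤ := SIPaux.aseq hex with ha
  have hpos : ∀ p, 0 < a p := SIPaux.aseq_pos hA'pos hex
  have hgrow : ∀ p, 2 * ∑ q ∈ Finset.range p, a q < a p := SIPaux.aseq_grow hex
  -- sums lie in IP A'
  have hsumsIP : ∀ i ∈ SIPaux.sums a, i ∈ IP A' := by
    rintro i ⟨F, rfl⟩
    refine ⟨F.image a, ?_, ?_⟩
    · intro z hz
      simp only [Finset.coe_image, Set.mem_image, Finset.mem_coe] at hz
      obtain ⟨p, -, rfl⟩ := hz
      exact SIPaux.aseq_mem hex p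
    · rw [Finset.sum_image]
      intro p _ q _ hpq
      exact (SIPaux.smono hpos hgrow).injective hpq
  -- the transitive point
  set x₀ : ℤ → Bool := fun i => if i ∈ SIPaux.sums a then true else false with hx₀def
  have hx₀iff : ∀ i, x₀ i = true ↔ i ∈ SIPaux.sums a := by
    intro i
    by_cases h : i ∈ SIPaux.sums a <;> simp [hx₀def, h]
  -- recurrence of x₀
  have hx₀rec : ∀ j : ℤ, ∀ᶠ p in atTop, x₀ (j + a p) = x₀ j := by
    intro j
    filter_upwards [SIPaux.recurrence hpos hgrow j] with p hp
    simp only [hx₀def]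
    exact if_congr hp rfl rfl
  set orb : Set (ℤ → Bool) := Set.range fun m : ℤ => SIPaux.Tshift m x₀ with horb
  set Y0 : Set (ℤ → Bool) := closure orb with hY0def
  have horbY0 : orb ⊆ Y0 := subset_closure
  have hTmem : ∀ m : ℤ, SIPaux.Tshift m x₀ ∈ Y0 := fun m => horbY0 ⟨m, rfl⟩
  have hY0closed : IsClosed Y0 := isClosed_closure
  have hY0inv : SIPaux.shiftHomeo '' Y0 = Y0 := by
    rw [hY0def, SIPaux.shiftHomeo.image_closure, SIPaux.shift_image_orbit]
  -- the system
  set S : ↥Y0 ≃ₜ ↥Y0 :=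
    (SIPaux.shiftHomeo.image Y0).trans (Homeomorph.setCongr hY0inv) with hS
  have hSval : ∀ y : ↥Y0, (S y).1 = fun i => y.1 (i + 1) := fun y => rfl
  have hiter : ∀ (n : ℕ) (y : ↥Y0), ((⇑S)^[n] y).1 = fun i => y.1 (i + n) := by
    intro n
    induction n with
    | zero => intro y; funext i; simp
    | succ n ih =>
      intro y
      rw [Function.iterate_succ_apply']
      funext i
      have h1 : ((S ((⇑S)^[n] y)) : ↥Y0).1 i = ((⇑S)^[n] y).1 (i + 1) := by
        rw [hSval]
      rw [h1, ih y]
      exact congrArg y.1 (by push_cast; ring)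
  -- the open set
  set G : Set ↥Y0 := (fun y : ↥Y0 => y.1 0) ⁻¹' {true} with hGdef
  have hGopen : IsOpen G :=
    ((continuous_apply (0 : ℤ)).comp continuous_subtype_val).isOpen_preimage _
      (isOpen_discrete _)
  have hx₀Y0 : x₀ ∈ Y0 := by
    have : x₀ = SIPaux.Tshift 0 x₀ := funext fun i => congrArg x₀ (by ring)
    rw [this]; exact hTmem 0
  have hGne : G.Nonempty := by
    refine ⟨⟨x₀, hx₀Y0⟩, ?_⟩
    simp only [hGdef, Set.mem_preimage, Set.mem_singleton_iff]
    exact (hx₀iff 0).mpr SIPaux.zero_mem_sums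
  -- hitting G G ⊆ A
  have hhit : hitting S G G ⊆ A := by
    rintro n ⟨hn, y, hyG, hynG⟩
    have hnat : ((n.toNat : ℤ)) = n := Int.toNat_of_nonneg hn.le
    have hy0 : y.1 0 = true := hyG
    have hyn : y.1 n = true := by
      have h := hynG
      simp only [hGdef, Set.mem_preimage, Set.mem_singleton_iff] at h
      rw [hiter n.toNat y] at h
      simpa [hnat] using h
    -- approximate y by an orbit point on coordinates 0 and n
    have hW : IsOpen {z : ℤ → Bool | z 0 = true ∧ z n = true} := by
      have h1 : IsOpen ((fun z : ℤ → Bool => z 0) ⁻¹' {true}) :=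
        (continuous_apply (0 : ℤ)).isOpen_preimage _ (isOpen_discrete _)
      have h2 : IsOpen ((fun z : ℤ → Bool => z n) ⁻¹' {true}) :=
        (continuous_apply n).isOpen_preimage _ (isOpen_discrete _)
      exact h1.inter h2
    have hyW : y.1 ∈ {z : ℤ → Bool | z 0 = true ∧ z n = true} := ⟨hy0, hyn⟩
    have hyc : y.1 ∈ closure orb := y.2
    obtain ⟨z, hz1, hz2⟩ := mem_closure_iff.mp hyc _ hW hyW
    obtain ⟨m, rfl⟩ := hz2
    have hm : m ∈ SIPaux.sums a := by
      have h : x₀ (0 + m) = true := hz1.1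
      rw [zero_add] at h
      exact (hx₀iff m).mp h
    have hnm : n + m ∈ SIPaux.sums a := by
      have := hz1.2
      exact (hx₀iff (n + m)).mp this
    refine hA'sub ⟨⟨n + m, hsumsIP _ hnm, m, hsumsIP _ hm, by ring⟩, hn⟩
  -- convergence along the sequence a
  have hconv : ∀ m : ℤ, Tendsto (fun p => SIPaux.Tshift (m + a p) x₀) atTop
      (𝓝 (SIPaux.Tshift m x₀)) := by
    intro m
    rw [tendsto_pi_nhds]
    intro i
    rw [nhds_discrete Bool, tendsto_pure]
    filter_upwards [hx₀rec (i + m)] with p hp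
    show x₀ (i + (m + a p)) = x₀ (i + m)
    rw [← hp]
    exact congrArg x₀ (by ring)
  have hatend : Tendsto a atTop atTop := SIPaux.atendsto hpos hgrow
  -- transitivity
  have htrans : TopTrans S := by
    intro U V hU hV ⟨u, hu⟩ ⟨v, hv⟩
    obtain ⟨U', hU'o, hU'⟩ := isOpen_induced_iff.mp hU
    obtain ⟨V', hV'o, hV'⟩ := isOpen_induced_iff.mp hV
    have huU' : u.1 ∈ U' := by rw [← hU'] at hu; exact hu
    have hvV' : v.1 ∈ V' := by rw [← hV'] at hv; exact hv
    obtain ⟨z1, hz1U, hz1orb⟩ := mem_closure_iff.mp u.2 _ hU'o huU'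
    obtain ⟨k, rfl⟩ := hz1orb
    obtain ⟨z2, hz2V, hz2orb⟩ := mem_closure_iff.mp v.2 _ hV'o hvV'
    obtain ⟨m, rfl⟩ := hz2orb
    have hev1 : ∀ᶠ p in atTop, SIPaux.Tshift (m + a p) x₀ ∈ V' :=
      (hconv m).eventually (hV'o.eventually_mem hz2V)
    have hev2 : ∀ᶠ p in atTop, k - m < a p := hatend.eventually_gt_atTop (k - m)
    obtain ⟨p, hp1, hp2⟩ := (hev1.and hev2).exists
    set l : ℤ := m + a p with hl
    have hkl : k < l := by omega
    set n : ℤ := l - k with hn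
    have hn0 : 0 < n := by omega
    have hnnat : ((n.toNat : ℤ)) = n := Int.toNat_of_nonneg hn0.le
    refine ⟨n, hn0, ⟨SIPaux.Tshift k x₀, hTmem k⟩, ?_, ?_⟩
    · rw [← hU']; exact hz1U
    · rw [← hV']
      show ((⇑S)^[n.toNat] ⟨SIPaux.Tshift k x₀, hTmem k⟩).1 ∈ V'
      rw [hiter]
      have heq : (fun i => SIPaux.Tshift k x₀ (i + n.toNat)) = SIPaux.Tshift l x₀ := by
        funext i
        show x₀ (i + ↑n.toNat + k) = x₀ (i + l)
        rw [hnnat]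
        exact congrArg x₀ (by omega)
      rw [heq]
      exact hp1
  -- assemble
  letI mY : MetricSpace ↥Y0 := TopologicalSpace.metrizableSpaceMetric ↥Y0
  have hcompact : CompactSpace ↥Y0 := isCompact_iff_compactSpace.mp hY0closed.isCompact
  exact ⟨↥Y0, mY, hcompact, S, G, htrans, hGopen, hGne, hhit⟩
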